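/- Let f : ℝⁿ × ℝᵐ → ℝⁿ, φ : ℝⁿ × ℝᵐ → ℝᵏ, and L : ℝⁿ × ℝᵐ → ℝ be continuously differentiable. Let (q,u,p,λ) : [t₀,t₁] → ℝⁿ × ℝᵐ × ℝⁿ × ℝᵏ be a continuously differentiable solution of the augmented adjoint DAE system: q̇ = f(q,u), ṗ = −D_qf(q,u)ᵀ p − D_qφ(q,u)ᵀ λ − ∇_qL(q,u), 0 = φ(q,u), 0 = D_uf(q,u)ᵀ p + D_uφ(q,u)ᵀ λ + ∇_uL(q,u), and let (δq, δu) : [t₀,t₁] → ℝⁿ × ℝᵐ satisfy the variational equations along (q,u): δq̇ = D_qf(q,u) δq + D_uf(q,u) δu and 0 = D_qφ(q,u) δq + D_uφ(q,u) δu. Then for all t ∈ [t₀,t₁], d/dt ⟨p(t), δq(t)⟩ = −⟨∇_qL(q(t),u(t)), δq(t)⟩ − ⟨∇_uL(q(t),u(t)), δu(t)⟩. -/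

import Mathlib

open scoped RealInnerProductSpace

noncomputable section

abbrev Euc (n : ℕ) : Type := EuclideanSpace ℝ (Fin n)

/-- Partial Jacobian `D_qF(q,u)` with respect to the first argument. -/
noncomputable def Dq {n m k : ℕ} (F : Euc n × Euc m → Euc k) (q : Euc n) (u : Euc m) :
    Euc n →L[ℝ] Euc k :=
  fderiv ℝ (fun q' => F (q', u)) q

/-- Partial Jacobian `D_uF(q,u)` with respect to the second argument. -/
noncomputable def Du {n m k : ℕ} (F : Euc n × Euc m → Euc k) (q : Euc n) (u : Euc m) :
    Euc m →L[ℝ] Euc k :=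
  fderiv ℝ (fun u' => F (q, u')) u

/-- `D_qF(q,u)ᵀ`, the transpose (adjoint) of the partial Jacobian in `q`. -/
noncomputable def DqT {n m k : ℕ} (F : Euc n × Euc m → Euc k) (q : Euc n) (u : Euc m) :
    Euc k →L[ℝ] Euc n :=
  ContinuousLinearMap.adjoint (Dq F q u)

/-- `D_uF(q,u)ᵀ`, the transpose (adjoint) of the partial Jacobian in `u`. -/
noncomputable def DuT {n m k : ℕ} (F : Euc n × Euc m → Euc k) (q : Euc n) (u : Euc m) :
    Euc k →L[ℝ] Euc m :=
  ContinuousLinearMap.adjoint (Du F q u)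

/-- Partial gradient `∇_qL(q,u)`. -/
noncomputable def gradQ {n m : ℕ} (L : Euc n × Euc m → ℝ) (q : Euc n) (u : Euc m) : Euc n :=
  gradient (fun q' => L (q', u)) q

/-- Partial gradient `∇_uL(q,u)`. -/
noncomputable def gradU {n m : ℕ} (L : Euc n × Euc m → ℝ) (q : Euc n) (u : Euc m) : Euc m :=
  gradient (fun u' => L (q, u')) u

open ContinuousLinearMap

section AdjointIdentity

variable {E F G : Type*} [NormedAddCommGroup E] [InnerProductSpace ℝ E] [CompleteSpace E]
  [NormedAddCommGroup F] [InnerProductSpace ℝ F] [CompleteSpace F]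
  [NormedAddCommGroup G] [InnerProductSpace ℝ G] [CompleteSpace G]

/- The `A`-terms cancel by adjointness; the multiplier `lam` drops out because `(dq, du)` lies in
the kernel of `(C, D)`, which turns `⟪C† lam, dq⟫` into `-⟪D† lam, du⟫`. -/
theorem inner_adjoint_rhs_add_inner_variational_rhs (A : E →L[ℝ] E) (B : F →L[ℝ] E)
    (C : E →L[ℝ] G) (D : F →L[ℝ] G) {p dq gq : E} {du gu : F} {lam : G}
    (hvar : C dq + D du = 0) (hadj : adjoint B p + adjoint D lam + gu = 0) :
    ⟪p, A dq + B du⟫ + ⟪-(adjoint A p) - adjoint C lam - gq, dq⟫ = -⟪gq, dq⟫ - ⟪gu, du⟫ := by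
  have hvar' : ⟪lam, C dq⟫ + ⟪lam, D du⟫ = 0 := by
    rw [← inner_add_right, hvar, inner_zero_right]
  have hadj' : ⟪adjoint B p, du⟫ + ⟪adjoint D lam, du⟫ + ⟪gu, du⟫ = 0 := by
    rw [← inner_add_left, ← inner_add_left, hadj, inner_zero_left]
  simp only [inner_add_right, inner_sub_left, inner_neg_left, adjoint_inner_left] at hadj' ⊢
  linear_combination hadj' - hvar'

end AdjointIdentity

theorem augmented_adjoint_DAE_quadratic_identity_general {n m k : ℕ}
    (f : Euc n × Euc m → Euc n) (φ : Euc n × Euc m → Euc k) (L : Euc n × Euc m → ℝ)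
    (t₀ t₁ : ℝ)
    (q : ℝ → Euc n) (u : ℝ → Euc m) (p : ℝ → Euc n) (lam : ℝ → Euc k)
    (δq : ℝ → Euc n) (δu : ℝ → Euc m)
    (hpode : ∀ t ∈ Set.Icc t₀ t₁,
      HasDerivAt p (-(DqT f (q t) (u t) (p t)) - DqT φ (q t) (u t) (lam t)
        - gradQ L (q t) (u t)) t)
    (hadj : ∀ t ∈ Set.Icc t₀ t₁,
      DuT f (q t) (u t) (p t) + DuT φ (q t) (u t) (lam t) + gradU L (q t) (u t) = 0)
    (hδqode : ∀ t ∈ Set.Icc t₀ t₁,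
      HasDerivAt δq (Dq f (q t) (u t) (δq t) + Du f (q t) (u t) (δu t)) t)
    (hδconstr : ∀ t ∈ Set.Icc t₀ t₁,
      Dq φ (q t) (u t) (δq t) + Du φ (q t) (u t) (δu t) = 0) :
    ∀ t ∈ Set.Icc t₀ t₁,
      HasDerivAt (fun s => ⟪p s, δq s⟫)
        (-⟪gradQ L (q t) (u t), δq t⟫ - ⟪gradU L (q t) (u t), δu t⟫) t := by
  intro t ht
  exact ((hpode t ht).inner ℝ (hδqode t ht)).congr_deriv
    (inner_adjoint_rhs_add_inner_variational_rhs (Dq f (q t) (u t)) _ _ _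
      (hδconstr t ht) (hadj t ht))

/-- along a solution of the augmented adjoint DAE system and a solution
of the variational equations covering the same `(q,u)`,
`d/dt ⟨p, δq⟩ = −⟨∇_qL(q,u), δq⟩ − ⟨∇_uL(q,u), δu⟩`. -/
theorem augmented_adjoint_DAE_quadratic_identity {n m k : ℕ}
    (f : Euc n × Euc m → Euc n) (φ : Euc n × Euc m → Euc k) (L : Euc n × Euc m → ℝ)
    (hf : ContDiff ℝ 1 f) (hφ : ContDiff ℝ 1 φ) (hL : ContDiff ℝ 1 L)
    (t₀ t₁ : ℝ)
    (q : ℝ → Euc n) (u : ℝ → Euc m) (p : ℝ → Euc n) (lam : ℝ → Euc k)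
    (δq : ℝ → Euc n) (δu : ℝ → Euc m)
    (hq : ContDiff ℝ 1 q) (hu : ContDiff ℝ 1 u) (hp : ContDiff ℝ 1 p)
    (hlam : ContDiff ℝ 1 lam) (hδq : ContDiff ℝ 1 δq) (hδu : ContDiff ℝ 1 δu)
    (hqode : ∀ t ∈ Set.Icc t₀ t₁, HasDerivAt q (f (q t, u t)) t)
    (hpode : ∀ t ∈ Set.Icc t₀ t₁,
      HasDerivAt p (-(DqT f (q t) (u t) (p t)) - DqT φ (q t) (u t) (lam t)
        - gradQ L (q t) (u t)) t)
    (hconstr : ∀ t ∈ Set.Icc t₀ t₁, φ (q t, u t) = 0)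
    (hadj : ∀ t ∈ Set.Icc t₀ t₁,
      DuT f (q t) (u t) (p t) + DuT φ (q t) (u t) (lam t) + gradU L (q t) (u t) = 0)
    (hδqode : ∀ t ∈ Set.Icc t₀ t₁,
      HasDerivAt δq (Dq f (q t) (u t) (δq t) + Du f (q t) (u t) (δu t)) t)
    (hδconstr : ∀ t ∈ Set.Icc t₀ t₁,
      Dq φ (q t) (u t) (δq t) + Du φ (q t) (u t) (δu t) = 0) :
    ∀ t ∈ Set.Icc t₀ t₁,
      HasDerivAt (fun s => ⟪p s, δq s⟫)
        (-⟪gradQ L (q t) (u t), δq t⟫ - ⟪gradU L (q t) (u t), δu t⟫) t :=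
  augmented_adjoint_DAE_quadratic_identity_general f φ L t₀ t₁ q u p lam δq δu hpode hadj hδqode
    hδconstr

end
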